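/- Lemma 1. Let F(x, y_0, y_1, …, y_n) be holomorphic in a neighborhood of 0 ∈ ℂ^{n+2}, let φ ∈ 𝒢 be a generalized power series, and let Δ be one of the operators δ, σ, μ. Then the formal substitution F(x, φ, Δφ, …, Δ^n φ) is a well-defined generalized power series, i.e. an element of 𝒢: for every N > 0, only finitely many exponents occurring in the substituted series have real part less than N. -/

import Mathlib

open Filter

open scoped Classical

noncomputable section

/-- The coefficient function of a (raw) generalized power series `f = Σ_λ f(λ) x^λ`. -/
abbrev RawGS := ℂ → ℂ

/-- `f` is a generalized power series (an element of the algebra `𝒢`): all exponents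
carrying a nonzero coefficient have positive real part, and for every `N` only finitely
many of them have real part `< N` (hence the real parts tend to `+∞`). -/
def IsGen (f : RawGS) : Prop :=
  (∀ lam : ℂ, f lam ≠ 0 → 0 < lam.re) ∧
  ∀ N : ℝ, {lam : ℂ | f lam ≠ 0 ∧ lam.re < N}.Finite

/-- The series `1 = x^0`. -/
def gsOne : RawGS := fun lam => if lam = 0 then 1 else 0

/-- Cauchy product of two generalized power series (coefficient functions). -/
def gsMul (f g : RawGS) : RawGS := fun nu =>
  ∑ᶠ p : ℂ × ℂ, if p.1 + p.2 = nu then f p.1 * g p.2 else 0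

/-- Powers of a generalized power series. -/
def gsPow (f : RawGS) : ℕ → RawGS
  | 0 => gsOne
  | k + 1 => gsMul f (gsPow f k)

/-- Product of a finite list of generalized power series. -/
def gsProdList : List RawGS → RawGS
  | [] => gsOne
  | f :: t => gsMul f (gsProdList t)

/-- Formal substitution `F(x, Φ 0, …, Φ n)`, where `A k p` is the Taylor coefficient of
`x^k · y₀^{p₀} ⋯ yₙ^{pₙ}` of `F(x, y₀, …, yₙ)`: the coefficient of `x^ν` is
`Σ_{k,p} A k p · (coefficient of x^{ν - k} in Φ₀^{p₀} ⋯ Φₙ^{pₙ})`. -/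
def gsSubst {n : ℕ} (A : ℕ → (Fin (n + 1) →₀ ℕ) → ℂ) (Φ : Fin (n + 1) → RawGS) : RawGS :=
  fun nu => ∑ᶠ (k : ℕ) (p : Fin (n + 1) →₀ ℕ),
    A k p * gsProdList (List.ofFn fun j => gsPow (Φ j) (p j)) (nu - (k : ℂ))

/-- Taylor coefficients of the partial derivative `∂F/∂y_j`. -/
def pderivCoeff {n : ℕ} (A : ℕ → (Fin (n + 1) →₀ ℕ) → ℂ) (j : Fin (n + 1)) :
    ℕ → (Fin (n + 1) →₀ ℕ) → ℂ :=
  fun k p => ((p j + 1 : ℕ) : ℂ) * A k (p + Finsupp.single j 1)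

/-- The Taylor series `A` of `F` has a nonzero (poly)radius of convergence, i.e. `F` is
holomorphic in a neighborhood of the origin of `ℂ^{n+2}`. -/
def MvRadiusPos {n : ℕ} (A : ℕ → (Fin (n + 1) →₀ ℕ) → ℂ) : Prop :=
  ∃ r : ℝ, 0 < r ∧ ∃ C : ℝ, ∀ (k : ℕ) (p : Fin (n + 1) →₀ ℕ),
    ‖A k p‖ * r ^ (k + p.sum fun _ e => e) ≤ C

/-- The operator `δ = x d/dx` on generalized power series. -/
def gsDelta : RawGS → RawGS := fun f lam => lam * f lam

/-- The operator `σ : y(x) ↦ y(qx)` on generalized power series, where `q = exp lnq`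
for a fixed branch `lnq` of `ln q`:  `σ(Σ c_λ x^λ) = Σ c_λ q^λ x^λ`. -/
def gsSigma (lnq : ℂ) : RawGS → RawGS := fun f lam => Complex.exp (lam * lnq) * f lam

/-- The Mahler operator `μ : y(x) ↦ y(x^ℓ)` on generalized power series:
`μ(Σ c_λ x^λ) = Σ c_λ x^{ℓλ}`. -/
def gsMu (l : ℕ) : RawGS → RawGS := fun f lam => f (lam / (l : ℂ))

/-- `f = a·x^ν + o(x^ν)`: the coefficient of `x^ν` is `a` and every other exponent with a
nonzero coefficient has real part `> Re ν`. -/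
def LeadingTerm (f : RawGS) (a nu : ℂ) : Prop :=
  f nu = a ∧ ∀ lam : ℂ, f lam ≠ 0 → lam = nu ∨ nu.re < lam.re

/-- Membership in the additive semigroup generated by `ρ 0, …, ρ (τ-1)`. -/
def InSemigroup {τ : ℕ} (ρ : Fin τ → ℂ) (lam : ℂ) : Prop :=
  ∃ m : Fin τ → ℕ, m ≠ 0 ∧ lam = ∑ i, (m i : ℂ) * ρ i

/-- The complex numbers `ρ 0, …, ρ (τ-1)` are linearly independent over `ℤ`. -/
def ZLinIndep {τ : ℕ} (ρ : Fin τ → ℂ) : Prop :=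
  ∀ m : Fin τ → ℤ, (∑ i, (m i : ℂ) * ρ i) = 0 → m = 0

/-- The sector `{x = t e^{iθ} : 0 < t < r, α < θ < β}` with vertex at `0`, parametrized
by `(t, θ)` (which also fixes the branch of `log x = log t + iθ` on the sector). -/
def Sector (r alpha beta : ℝ) : Set (ℝ × ℝ) :=
  {p | 0 < p.1 ∧ p.1 < r ∧ alpha < p.2 ∧ p.2 < beta}

/-- The single term `f(λ)·x^λ = f(λ)·e^{λ(log t + iθ)}` of the series at the point
`x = t e^{iθ}` of a sector. -/
def gsTermFun (f : RawGS) (lam : ℂ) (p : ℝ × ℝ) : ℂ :=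
  f lam * Complex.exp (lam * ((Real.log p.1 : ℂ) + (p.2 : ℂ) * Complex.I))

/-- The generalized power series `f` converges uniformly on every sector with vertex at
`0` of sufficiently small radius and opening less than `2π`. -/
def ConvergesOnSectors (f : RawGS) : Prop :=
  ∀ alpha beta : ℝ, alpha < beta → beta - alpha < 2 * Real.pi →
    ∃ r : ℝ, 0 < r ∧ ∃ g : ℝ × ℝ → ℂ,
      TendstoUniformlyOn (fun (s : Finset ℂ) p => ∑ lam ∈ s, gsTermFun f lam p) g
        atTop (Sector r alpha beta)

/-!
Every series involved has its exponents in a half-plane `Re λ ≥ c` for a common `c > 0`: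
`φ` does because only finitely many of its exponents have real part `< 1`, and `δ`, `σ`
only rescale coefficients while `μ` multiplies exponents by `ℓ ≥ 1`. Exponents of a product
`Φ₀^{p₀} ⋯ Φₙ^{pₙ}` then have real part `≥ (p₀ + ⋯ + pₙ) c`, so only the finitely many
monomials `x^k y^p` with `k < N` and `(p₀ + ⋯ + pₙ) c < N` can contribute an exponent of real
part `< N`, each contributing finitely many.
-/

def IsGenGE (c : ℝ) (f : RawGS) : Prop :=
  (∀ lam : ℂ, f lam ≠ 0 → c ≤ lam.re) ∧
  ∀ N : ℝ, {lam : ℂ | f lam ≠ 0 ∧ lam.re < N}.Finite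

lemma exists_ne_zero_of_finsum_ne_zero {α M : Type*} [AddCommMonoid M] {f : α → M}
    (h : ∑ᶠ a, f a ≠ 0) : ∃ a, f a ≠ 0 := by
  by_contra! hf
  exact h (finsum_eq_zero_of_forall_eq_zero hf)

lemma exists_add_eq_of_gsMul_ne_zero {f g : RawGS} {nu : ℂ} (h : gsMul f g nu ≠ 0) :
    ∃ l m : ℂ, f l ≠ 0 ∧ g m ≠ 0 ∧ l + m = nu := by
  obtain ⟨⟨l, m⟩, hlm⟩ := exists_ne_zero_of_finsum_ne_zero h
  by_cases he : l + m = nu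
  · rw [if_pos he] at hlm
    exact ⟨l, m, left_ne_zero_of_mul hlm, right_ne_zero_of_mul hlm, he⟩
  · exact absurd (if_neg he) hlm

lemma exists_ne_zero_of_gsSubst_ne_zero {n : ℕ} {A : ℕ → (Fin (n + 1) →₀ ℕ) → ℂ}
    {Φ : Fin (n + 1) → RawGS} {nu : ℂ} (h : gsSubst A Φ nu ≠ 0) :
    ∃ (k : ℕ) (p : Fin (n + 1) →₀ ℕ),
      gsProdList (List.ofFn fun j => gsPow (Φ j) (p j)) (nu - k) ≠ 0 := by
  obtain ⟨k, hk⟩ := exists_ne_zero_of_finsum_ne_zero h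
  obtain ⟨p, hp⟩ := exists_ne_zero_of_finsum_ne_zero hk
  exact ⟨k, p, right_ne_zero_of_mul hp⟩

namespace IsGenGE

variable {a b c : ℝ} {f g : RawGS}

lemma of_ne_zero_imp (hf : IsGenGE c f) (hgf : ∀ lam, g lam ≠ 0 → f lam ≠ 0) :
    IsGenGE c g :=
  ⟨fun lam h => hf.1 lam (hgf lam h),
    fun N => (hf.2 N).subset fun lam h => ⟨hgf lam h.1, h.2⟩⟩

lemma gsOne : IsGenGE 0 gsOne := by
  have hsupp : ∀ lam : ℂ, _root_.gsOne lam ≠ 0 → lam = 0 := fun lam h => by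
    by_contra h0
    exact h (if_neg h0)
  refine ⟨fun lam h => by simp [hsupp lam h], fun N => ?_⟩
  exact (Set.finite_singleton 0).subset fun lam h => hsupp lam h.1

lemma gsMul (hf : IsGenGE a f) (hg : IsGenGE b g) : IsGenGE (a + b) (_root_.gsMul f g) := by
  constructor
  · intro nu hnu
    obtain ⟨l, m, hl, hm, rfl⟩ := exists_add_eq_of_gsMul_ne_zero hnu
    rw [Complex.add_re]
    exact add_le_add (hf.1 l hl) (hg.1 m hm)
  · intro N
    refine (((hf.2 (N - b)).prod (hg.2 (N - a))).image fun q : ℂ × ℂ => q.1 + q.2).subset ?_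
    rintro nu ⟨hnu, hre⟩
    obtain ⟨l, m, hl, hm, rfl⟩ := exists_add_eq_of_gsMul_ne_zero hnu
    rw [Complex.add_re] at hre
    have hla := hf.1 l hl
    have hmb := hg.1 m hm
    exact ⟨(l, m), ⟨⟨hl, by linarith⟩, ⟨hm, by linarith⟩⟩, rfl⟩

lemma gsPow (hf : IsGenGE c f) (k : ℕ) : IsGenGE (k * c) (_root_.gsPow f k) := by
  induction k with
  | zero => simp [_root_.gsPow, gsOne]
  | succ k ih => simpa [_root_.gsPow, add_mul, add_comm] using hf.gsMul ih

lemma gsProdList_ofFn {m : ℕ} {g : Fin m → RawGS} {d : Fin m → ℝ}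
    (hg : ∀ j, IsGenGE (d j) (g j)) : IsGenGE (∑ j, d j) (gsProdList (List.ofFn g)) := by
  induction m with
  | zero => simpa [gsProdList] using gsOne
  | succ m ih =>
    rw [List.ofFn_succ, Fin.sum_univ_succ]
    exact (hg 0).gsMul (ih fun j => hg j.succ)

lemma gsDelta (hf : IsGenGE c f) : IsGenGE c (_root_.gsDelta f) :=
  hf.of_ne_zero_imp fun _ h => right_ne_zero_of_mul h

lemma gsSigma (hf : IsGenGE c f) (lnq : ℂ) : IsGenGE c (_root_.gsSigma lnq f) :=
  hf.of_ne_zero_imp fun _ h => right_ne_zero_of_mul h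

lemma gsMu (hf : IsGenGE c f) (hc : 0 ≤ c) {l : ℕ} (hl : 1 ≤ l) :
    IsGenGE c (_root_.gsMu l f) := by
  have hl0 : (0 : ℝ) < l := by exact_mod_cast hl
  have hshrink : ∀ lam : ℂ, _root_.gsMu l f lam ≠ 0 → c ≤ (lam / l).re ∧ (lam / l).re ≤ lam.re :=
    fun lam h => by
      have hcle := hf.1 _ h
      refine ⟨hcle, ?_⟩
      rw [Complex.div_natCast_re] at hcle ⊢
      rw [le_div_iff₀ hl0] at hcle
      rw [div_le_iff₀ hl0]
      have hre_nonneg : 0 ≤ lam.re := (by positivity : 0 ≤ c * l).trans hcle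
      nlinarith [(Nat.one_le_cast (α := ℝ)).2 hl]
  refine ⟨fun lam h => (hshrink lam h).1.trans (hshrink lam h).2, fun N => ?_⟩
  have hl' : (l : ℂ) ≠ 0 := by exact_mod_cast (Nat.one_le_iff_ne_zero.1 hl)
  refine ((hf.2 N).image fun m : ℂ => m * l).subset ?_
  rintro lam ⟨h, hN⟩
  exact ⟨lam / l, ⟨h, (hshrink lam h).2.trans_lt hN⟩, div_mul_cancel₀ lam hl'⟩

end IsGenGE

lemma IsGen.exists_isGenGE {φ : RawGS} (hφ : IsGen φ) : ∃ c : ℝ, 0 < c ∧ IsGenGE c φ := by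
  -- `c` is the least real part among `1` and the finitely many exponents below `1`
  obtain ⟨a, ha, hmin⟩ := Set.exists_min_image (insert 1 {lam | φ lam ≠ 0 ∧ lam.re < 1})
    Complex.re ((hφ.2 1).insert 1) (Set.insert_nonempty _ _)
  refine ⟨a.re, ?_, fun lam hl => ?_, hφ.2⟩
  · rcases ha with rfl | ⟨ha, -⟩
    · exact one_pos
    · exact hφ.1 a ha
  · by_cases h1 : lam.re < 1
    · exact hmin lam (Or.inr ⟨hl, h1⟩)
    · exact (hmin 1 (Or.inl rfl)).trans (by simpa using h1)

lemma IsGenGE.gsSubst {n : ℕ} (A : ℕ → (Fin (n + 1) →₀ ℕ) → ℂ) {Φ : Fin (n + 1) → RawGS}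
    {c : ℝ} (hc : 0 < c) (hΦ : ∀ j, IsGenGE c (Φ j)) : IsGenGE 0 (_root_.gsSubst A Φ) := by
  set prod := fun p : Fin (n + 1) →₀ ℕ =>
    gsProdList (List.ofFn fun j => _root_.gsPow (Φ j) (p j))
  have hprod (p : Fin (n + 1) →₀ ℕ) : IsGenGE (∑ j, (p j : ℝ) * c) (prod p) :=
    IsGenGE.gsProdList_ofFn fun j => (hΦ j).gsPow (p j)
  have hdeg_nonneg (p : Fin (n + 1) →₀ ℕ) : 0 ≤ ∑ j, (p j : ℝ) * c :=
    Finset.sum_nonneg fun j _ => by positivity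
  have hre (nu : ℂ) (k : ℕ) : (nu - k).re = nu.re - k := by simp
  have hsource (nu : ℂ) (h : _root_.gsSubst A Φ nu ≠ 0) : ∃ (k : ℕ) (p : Fin (n + 1) →₀ ℕ),
      prod p (nu - k) ≠ 0 ∧ (k : ℝ) + ∑ j, (p j : ℝ) * c ≤ nu.re := by
    obtain ⟨k, p, hkp⟩ := exists_ne_zero_of_gsSubst_ne_zero h
    have := (hprod p).1 _ hkp
    rw [hre] at this
    exact ⟨k, p, hkp, by linarith⟩
  constructor
  · intro nu h
    obtain ⟨k, p, -, hle⟩ := hsource nu h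
    linarith [hdeg_nonneg p, (Nat.cast_nonneg k : (0 : ℝ) ≤ k)]
  · intro N
    set P : Fin (n + 1) →₀ ℕ := Finsupp.equivFunOnFinite.symm fun _ => ⌈N / c⌉₊
    refine (Set.Finite.biUnion (Finset.range ⌈N⌉₊).finite_toSet fun k _ =>
      Set.Finite.biUnion (Finset.Iic P).finite_toSet fun p _ =>
        ((hprod p).2 N).image fun lam : ℂ => lam + (k : ℂ)).subset ?_
    rintro nu ⟨h, hN⟩
    obtain ⟨k, p, hkp, hle⟩ := hsource nu h
    have hk : k ∈ Finset.range ⌈N⌉₊ := by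
      rw [Finset.mem_range, Nat.lt_ceil]
      linarith [hdeg_nonneg p]
    have hp : p ∈ Finset.Iic P := by
      refine Finset.mem_Iic.2 fun j => (Nat.lt_ceil.2 (?_ : (p j : ℝ) < N / c)).le
      rw [lt_div_iff₀ hc]
      have := Finset.single_le_sum (fun i _ => by positivity : ∀ i ∈ Finset.univ,
        (0 : ℝ) ≤ (p i : ℝ) * c) (Finset.mem_univ j)
      linarith [(Nat.cast_nonneg k : (0 : ℝ) ≤ k)]
    refine Set.mem_biUnion hk (Set.mem_biUnion hp ⟨nu - k, ⟨hkp, ?_⟩, sub_add_cancel nu k⟩)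
    rw [hre]
    linarith [(Nat.cast_nonneg k : (0 : ℝ) ≤ k)]

theorem lemma1_substitution_well_defined_general {n : ℕ}
    (A : ℕ → (Fin (n + 1) →₀ ℕ) → ℂ)
    (φ : RawGS) (hφ : IsGen φ)
    (Δ : RawGS → RawGS)
    (hΔ : Δ = gsDelta ∨
      (∃ lnq : ℂ, Complex.exp lnq ≠ 1 ∧ Δ = gsSigma lnq) ∨
      (∃ l : ℕ, 2 ≤ l ∧ Δ = gsMu l)) :
    ∀ N : ℝ, 0 < N →
      {lam : ℂ | gsSubst A (fun j => Δ^[(j : ℕ)] φ) lam ≠ 0 ∧ lam.re < N}.Finite := by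
  obtain ⟨c, hc, hφc⟩ := hφ.exists_isGenGE
  have hΔc : ∀ f, IsGenGE c f → IsGenGE c (Δ f) := by
    rcases hΔ with rfl | ⟨lnq, -, rfl⟩ | ⟨l, hl, rfl⟩
    · exact fun f hf => hf.gsDelta
    · exact fun f hf => hf.gsSigma lnq
    · exact fun f hf => hf.gsMu hc.le (by omega)
  have hiter (j : ℕ) : IsGenGE c (Δ^[j] φ) := Function.Iterate.rec (IsGenGE c) hφc hΔc j
  exact fun N _ => (IsGenGE.gsSubst A hc fun j => hiter j).2 N

/-- **Lemma 1.**  If `F(x, y₀, …, yₙ)` is holomorphic near the origin of `ℂ^{n+2}`,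
`φ ∈ 𝒢` is a generalized power series and `Δ` is one of the operators `δ`, `σ`, `μ`,
then the formal substitution `F(x, φ, Δφ, …, Δⁿφ)` is a well-defined generalized power
series: for every `N > 0` only finitely many exponents occurring in the substituted
series have real part less than `N`. -/
theorem lemma1_substitution_well_defined {n : ℕ}
    (A : ℕ → (Fin (n + 1) →₀ ℕ) → ℂ) (hA : MvRadiusPos A)
    (φ : RawGS) (hφ : IsGen φ)
    (Δ : RawGS → RawGS)
    (hΔ : Δ = gsDelta ∨
      (∃ lnq : ℂ, Complex.exp lnq ≠ 1 ∧ Δ = gsSigma lnq) ∨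
      (∃ l : ℕ, 2 ≤ l ∧ Δ = gsMu l)) :
    ∀ N : ℝ, 0 < N →
      {lam : ℂ | gsSubst A (fun j => Δ^[(j : ℕ)] φ) lam ≠ 0 ∧ lam.re < N}.Finite :=
  lemma1_substitution_well_defined_general A φ hφ Δ hΔ
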